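/- For every integer k ≥ 1, the polynomial q_k(x) = x^{2k+5} − 2x^{2k+4} + x^{k+3} − 2x + 2 satisfies q_k(x) > 0 for every real x ≥ 2; hence every real root of q_k is strictly less than 2. -/
import Mathlib


/-- The characteristic polynomial of the pivoting-based recurrence:
`q_k(x) = x^(2k+5) − 2x^(2k+4) + x^(k+3) − 2x + 2`. -/
noncomputable def qPoly (k : ℕ) (x : ℝ) : ℝ :=
  x ^ (2 * k + 5) - 2 * x ^ (2 * k + 4) + x ^ (k + 3) - 2 * x + 2

/-- for every `k ≥ 1`, `q_k(x) > 0` for all real `x ≥ 2`; hence every real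
root of `q_k` is strictly less than 2. -/
theorem qPoly_pos_and_roots_lt_two (k : ℕ) (hk : 1 ≤ k) :
    (∀ x : ℝ, 2 ≤ x → 0 < qPoly k x) ∧
    (∀ x : ℝ, qPoly k x = 0 → x < 2) := by
  have hpos : ∀ x : ℝ, 2 ≤ x → 0 < qPoly k x := by
    intro x hx
    have hx1 : (1 : ℝ) ≤ x := by linarith
    have h1 : x ^ 3 ≤ x ^ (k + 3) := pow_le_pow_right₀ hx1 (by omega)
    have h2 : x ^ (2 * k + 5) = x * x ^ (2 * k + 4) := by
      rw [← pow_succ']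
    have h3 : 2 * x ^ (2 * k + 4) ≤ x * x ^ (2 * k + 4) := by
      have hp : (0 : ℝ) ≤ x ^ (2 * k + 4) := by positivity
      nlinarith
    have h4 : 4 * x ≤ x ^ 3 := by nlinarith [sq_nonneg x, sq_nonneg (x - 2)]
    unfold qPoly
    nlinarith
  refine ⟨hpos, fun x hx => ?_⟩
  by_contra h
  push_neg at h
  exact absurd hx (ne_of_gt (hpos x h))
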